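/- A permutation of length n is sortable by a single stack (i.e., can be transformed to the identity using push and pop operations on one stack) if and only if it avoids the pattern 231. -/

import Mathlib

namespace TwoStacks

/-- A state of the two-stacks-in-series machine: remaining input,
stack 1, stack 2 (tops at the head), and the output so far. -/
structure St where
  inp : List ℕ
  s1 : List ℕ
  s2 : List ℕ
  out : List ℕ
deriving DecidableEq

/-- The three moves. -/
inductive Mv
  | rho  -- input → stack 1
  | lam  -- stack 1 → stack 2
  | mu   -- stack 2 → output
deriving DecidableEq

/-- One move of the machine (`none` if the move is not applicable). -/
def step : Mv → St → Option St
  | .rho, ⟨x :: xs, s1, s2, o⟩ => some ⟨xs, x :: s1, s2, o⟩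
  | .lam, ⟨i, x :: xs, s2, o⟩ => some ⟨i, xs, x :: s2, o⟩
  | .mu,  ⟨i, s1, x :: xs, o⟩ => some ⟨i, s1, xs, o ++ [x]⟩
  | _, _ => none

/-- Run a word of moves on a state. -/
def run (w : List Mv) (s : St) : Option St :=
  w.foldlM (fun s m => step m s) s

/-- The list 1,2,…,n. -/
def idSeq (n : ℕ) : List ℕ := (List.range n).map (· + 1)

/-- The one-line notation p(1),…,p(n) (values in {1,…,n}) of a permutation. -/
def permList {n : ℕ} (p : Equiv.Perm (Fin n)) : List ℕ :=
  List.ofFn fun i => (p i : ℕ) + 1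

/-- p is achievable: from input 1,…,n some word of moves outputs p(1),…,p(n). -/
def Achievable {n : ℕ} (p : Equiv.Perm (Fin n)) : Prop :=
  ∃ w, run w ⟨idSeq n, [], [], []⟩ = some ⟨[], [], [], permList p⟩

/-- p is sortable: from input p(1),…,p(n) some word of moves outputs 1,…,n. -/
def Sortable {n : ℕ} (p : Equiv.Perm (Fin n)) : Prop :=
  ∃ w, run w ⟨permList p, [], [], []⟩ = some ⟨[], [], [], idSeq n⟩

/-- A list of (distinct) naturals is achievable as an output. -/
def AchList (l : List ℕ) : Prop :=
  ∃ w, run w ⟨idSeq l.length, [], [], []⟩ = some ⟨[], [], [], l⟩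

/-- Standardization (pattern) of a list with distinct entries:
each entry is replaced by its rank (1-based). -/
def std (l : List ℕ) : List ℕ :=
  l.map fun x => (l.filter (· ≤ x)).length

/-- An operation sequence of length 3n: n of each letter, and every
prefix has #ρ ≥ #λ ≥ #μ. -/
def OpSeq (n : ℕ) (w : List Mv) : Prop :=
  w.length = 3 * n ∧ w.count .rho = n ∧ w.count .lam = n ∧ w.count .mu = n ∧
  ∀ u, u <+: w → u.count .mu ≤ u.count .lam ∧ u.count .lam ≤ u.count .rho

/-- An x,y-Catalan word: word over {x,y} with equally many x's and y's
in which every prefix has at least as many x's as y's. -/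
def CatWord (x y : Mv) (w : List Mv) : Prop :=
  (∀ m ∈ w, m = x ∨ m = y) ∧ w.count x = w.count y ∧
  ∀ u, u <+: w → u.count y ≤ u.count x

/-- Two words have the same effect: applied to any state on which both
are applicable, they give the same resulting state. -/
def SameEffect (v v' : List Mv) : Prop :=
  ∀ s t t', run v s = some t → run v' s = some t' → t = t'

/-- Rank of a letter for the order ρ < λ < μ. -/
def rk : Mv → ℕ
  | .rho => 0
  | .lam => 1
  | .mu => 2

/-- The order ρ < λ < μ on letters. -/
def mlt (a b : Mv) : Prop := rk a < rk b

/-- Lexicographic order on words induced by ρ < λ < μ. -/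
def wordLt (v v' : List Mv) : Prop := List.Lex mlt v v'

/-- No entry is immediately followed by its successor. -/
def IncAvoid (l : List ℕ) : Prop :=
  ∀ j (h : j + 1 < l.length), l.get ⟨j + 1, h⟩ ≠ l.get ⟨j, by omega⟩ + 1

/-- Single-stack machine: state = (remaining input, stack, output). -/
structure St1 where
  inp : List ℕ
  stk : List ℕ
  out : List ℕ

inductive Mv1 | push | pop

def step1 : Mv1 → St1 → Option St1
  | .push, ⟨x :: xs, st, o⟩ => some ⟨xs, x :: st, o⟩
  | .pop,  ⟨i, x :: xs, o⟩ => some ⟨i, xs, o ++ [x]⟩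
  | _, _ => none

def run1 (w : List Mv1) (s : St1) : Option St1 :=
  w.foldlM (fun s m => step1 m s) s

/-- p is sortable by a single stack. -/
def StackSortable {n : ℕ} (p : Equiv.Perm (Fin n)) : Prop :=
  ∃ w, run1 w ⟨permList p, [], []⟩ = some ⟨[], [], idSeq n⟩

/-- p avoids the pattern 231. -/
def Avoids231 {n : ℕ} (p : Equiv.Perm (Fin n)) : Prop :=
  ¬ ∃ i j k : Fin n, i < j ∧ j < k ∧ p k < p i ∧ p i < p j

/-! ### Auxiliary development for the single-stack theorem -/

open List

/-- `Gen inp st o`: from a single-stack state with remaining input `inp` and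
stack `st`, one can finish (empty input and stack) emitting exactly `o`. -/
inductive Gen : List ℕ → List ℕ → List ℕ → Prop
  | nil : Gen [] [] []
  | push {inp st o x} : Gen inp (x :: st) o → Gen (x :: inp) st o
  | pop {inp st o x} : Gen inp st o → Gen inp (x :: st) (x :: o)

lemma run1_cons (m : Mv1) (w : List Mv1) (s : St1) :
    run1 (m :: w) s = (step1 m s).bind (run1 w) := by
  simp [run1, List.foldlM]
  rfl

lemma gen_to_run {i s o} (h : Gen i s o) :
    ∀ c, ∃ w, run1 w ⟨i, s, c⟩ = some ⟨[], [], c ++ o⟩ := by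
  induction h with
  | nil => intro c; exact ⟨[], by simp [run1]⟩
  | push h ih =>
      intro c
      obtain ⟨w, hw⟩ := ih c
      exact ⟨.push :: w, by simp [run1_cons, step1, hw]⟩
  | pop h ih =>
      intro c
      obtain ⟨w, hw⟩ := ih (c ++ [_])
      exact ⟨.pop :: w, by simp [run1_cons, step1]; simpa using hw⟩

lemma run_to_gen : ∀ (w : List Mv1) i s c out,
    run1 w ⟨i, s, c⟩ = some ⟨[], [], out⟩ → ∃ o, out = c ++ o ∧ Gen i s o := by
  intro w
  induction w with
  | nil =>
      intro i s c out h
      simp [run1] at h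
      obtain ⟨h1, h2, h3⟩ := h
      exact ⟨[], by simp [← h3], by rw [h1, h2]; exact Gen.nil⟩
  | cons m w ih =>
      intro i s c out h
      rw [run1_cons] at h
      match m with
      | .push =>
          match i with
          | [] => simp [step1] at h
          | x :: xs =>
              simp only [step1, Option.bind_some] at h
              obtain ⟨o, rfl, hg⟩ := ih _ _ _ _ h
              exact ⟨o, rfl, Gen.push hg⟩
      | .pop =>
          match s with
          | [] => simp [step1] at h
          | y :: ys =>
              simp only [step1, Option.bind_some] at h
              obtain ⟨o, ho, hg⟩ := ih _ _ _ _ h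
              exact ⟨y :: o, by simp [ho], Gen.pop hg⟩

lemma gen_perm {i s o} (h : Gen i s o) : o.Perm (i ++ s) := by
  induction h with
  | nil => simp
  | push h ih => exact ih.trans List.perm_middle
  | pop h ih =>
      exact (ih.cons _).trans (List.perm_middle.symm)

lemma gen_append {i s o} (h : Gen i s o) :
    ∀ {i2 s2 o2}, Gen i2 s2 o2 → Gen (i ++ i2) (s ++ s2) (o ++ o2) := by
  induction h with
  | nil => intro _ _ _ h2; simpa using h2
  | push h ih => intro _ _ _ h2; exact Gen.push (ih h2)
  | pop h ih => intro _ _ _ h2; exact Gen.pop (ih h2)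

lemma gen_split {i st o} (h : Gen i st o) :
    ∀ s1 x s2, st = s1 ++ x :: s2 →
      ∃ i1 i2 o1 o2, i = i1 ++ i2 ∧ o = o1 ++ x :: o2 ∧ Gen i1 s1 o1 ∧ Gen i2 s2 o2 := by
  induction h with
  | nil =>
      intro s1 x s2 hst
      exact absurd hst.symm (by simp)
  | @push inp st o y h ih =>
      intro s1 x s2 hst
      obtain ⟨i1, i2, o1, o2, h1, h2, hg1, hg2⟩ := ih (y :: s1) x s2 (by simp [hst])
      exact ⟨y :: i1, i2, o1, o2, by simp [h1], h2, Gen.push hg1, hg2⟩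
  | @pop inp st o y h ih =>
      intro s1 x s2 hst
      match s1, hst with
      | [], hst =>
          obtain ⟨rfl, rfl⟩ : y = x ∧ st = s2 := by simpa using hst
          exact ⟨[], inp, [], o, rfl, rfl, Gen.nil, h⟩
      | z :: s1', hst =>
          obtain ⟨rfl, hst'⟩ : y = z ∧ st = s1' ++ x :: s2 := by simpa using hst
          obtain ⟨i1, i2, o1, o2, h1, h2, hg1, hg2⟩ := ih s1' x s2 hst'
          exact ⟨i1, i2, y :: o1, o2, h1, by simp [h2], Gen.pop hg1, hg2⟩

/-- Pattern-231 avoidance for lists. -/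
def AvP (l : List ℕ) : Prop :=
  ∀ a b c : ℕ, List.Sublist [a, b, c] l → c < a → a < b → False

lemma pair_split {b c : ℕ} {t1 t2 : List ℕ} (h : [b, c] <+ t1 ++ t2) :
    [b, c] <+ t1 ∨ (b ∈ t1 ∧ c ∈ t2) ∨ [b, c] <+ t2 := by
  obtain ⟨u, v, huv, hu, hv⟩ := List.sublist_append_iff.mp h
  rcases u with _ | ⟨x0, u⟩
  · right; right
    have huv' : [b, c] = v := huv
    rwa [huv']
  · injection huv with h1 h2
    subst h1
    rcases u with _ | ⟨x1, u⟩
    · have h2' : [c] = v := h2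
      subst h2'
      right; left
      exact ⟨(List.singleton_sublist).mp hu, (List.singleton_sublist).mp hv⟩
    · injection h2 with h3 h4
      subst h3
      have : u = [] ∧ v = [] := by
        have := h4.symm
        simpa using this
      obtain ⟨rfl, rfl⟩ := this
      left; exact hu

lemma triple_split {a b c : ℕ} {t1 t2 : List ℕ} (h : [a, b, c] <+ t1 ++ t2) :
    [a, b, c] <+ t1 ∨ (a ∈ t1 ∧ [b, c] <+ t2) ∨ ([a, b] <+ t1 ∧ c ∈ t2) ∨
      [a, b, c] <+ t2 := by
  obtain ⟨u, v, huv, hu, hv⟩ := List.sublist_append_iff.mp h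
  rcases u with _ | ⟨x0, u⟩
  · right; right; right
    have huv' : [a, b, c] = v := huv
    rwa [huv']
  · injection huv with h1 h2
    subst h1
    rcases u with _ | ⟨x1, u⟩
    · have h2' : [b, c] = v := h2
      subst h2'
      right; left
      exact ⟨(List.singleton_sublist).mp hu, hv⟩
    · injection h2 with h3 h4
      subst h3
      rcases u with _ | ⟨x2, u⟩
      · have h4' : [c] = v := h4
        subst h4'
        right; right; left
        exact ⟨hu, (List.singleton_sublist).mp hv⟩
      · injection h4 with h5 h6
        subst h5
        have : u = [] ∧ v = [] := by
          have := h6.symm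
          simpa using this
        obtain ⟨rfl, rfl⟩ := this
        left; exact hu

lemma sortable_avoids : ∀ N l o, l.length ≤ N → Gen l [] o →
    o.Pairwise (· < ·) → AvP l := by
  intro N
  induction N with
  | zero =>
      intro l o hlen _ _ a b c hsub _ _
      rw [List.length_eq_zero_iff.mp (Nat.le_zero.mp hlen)] at hsub
      simp at hsub
  | succ N ih =>
      intro l o hlen hg hs
      rcases l with _ | ⟨x, t⟩
      · intro a b c hsub _ _; simp at hsub
      have hg' : Gen t [x] o := by
        cases hg with
        | push h => exact h
      obtain ⟨i1, i2, o1, o2, rfl, rfl, hg1, hg2⟩ := gen_split hg' [] x [] rfl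
      have hp1 : o1.Perm i1 := by simpa using gen_perm hg1
      have hp2 : o2.Perm i2 := by simpa using gen_perm hg2
      rw [List.pairwise_append] at hs
      obtain ⟨hs1, hs2', hcross⟩ := hs
      have hs2 : o2.Pairwise (· < ·) := hs2'.tail
      have hxo2 : ∀ z ∈ o2, x < z := fun z hz => List.rel_of_pairwise_cons hs2' hz
      have key1 : ∀ y ∈ i1, y < x := fun y hy =>
        hcross y (hp1.symm.mem_iff.mp hy) x (by simp)
      have key2 : ∀ z ∈ i2, x < z := fun z hz =>
        hxo2 z (hp2.symm.mem_iff.mp hz)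
      have hlen' : i1.length + i2.length + 1 ≤ N + 1 := by simpa using hlen
      have hlen1 : i1.length ≤ N := by omega
      have hlen2 : i2.length ≤ N := by omega
      intro a b c hsub hca hab
      cases hsub with
      | cons _ h' =>
          rcases triple_split h' with h1 | ⟨ha1, hbc⟩ | ⟨hab1, hc2⟩ | h2
          · exact ih i1 o1 hlen1 hg1 hs1 a b c h1 hca hab
          · have hc : c ∈ i2 := hbc.subset (by simp)
            have := key1 a ha1
            have := key2 c hc
            omega
          · have ha : a ∈ i1 := hab1.subset (by simp)
            have := key1 a ha
            have := key2 c hc2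
            omega
          · exact ih i2 o2 hlen2 hg2 hs2 a b c h2 hca hab
      | cons_cons _ h' =>
          rcases pair_split h' with h1 | ⟨hb1, hc2⟩ | h2
          · have hb : b ∈ i1 := h1.subset (by simp)
            have := key1 b hb
            omega
          · have := key1 b hb1
            omega
          · have hc : c ∈ i2 := h2.subset (by simp)
            have := key2 c hc
            omega

lemma exists_maximum : ∀ (l : List ℕ), l ≠ [] → ∃ m ∈ l, ∀ x ∈ l, x ≤ m := by
  intro l
  induction l with
  | nil => simp
  | cons x t ih =>
      intro _
      rcases t.eq_nil_or_concat with rfl | ⟨_, _, _⟩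
      · exact ⟨x, by simp, by simp⟩
      · obtain ⟨m, hm, hmax⟩ := ih (by subst_vars; simp)
        rcases le_total x m with h | h
        · exact ⟨m, by simp [hm], by
            intro y hy; rcases List.mem_cons.mp hy with rfl | hy
            · exact h
            · exact hmax y hy⟩
        · exact ⟨x, by simp, by
            intro y hy; rcases List.mem_cons.mp hy with rfl | hy
            · exact le_rfl
            · exact (hmax y hy).trans h⟩

lemma avoids_sortable : ∀ N l, l.length ≤ N → l.Nodup → AvP l →
    ∃ o, Gen l [] o ∧ o.Pairwise (· < ·) := by
  intro N
  induction N with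
  | zero =>
      intro l hlen _ _
      rw [List.length_eq_zero_iff.mp (Nat.le_zero.mp hlen)]
      exact ⟨[], Gen.nil, List.Pairwise.nil⟩
  | succ N ih =>
      intro l hlen hnd hav
      rcases eq_or_ne l [] with rfl | hne
      · exact ⟨[], Gen.nil, List.Pairwise.nil⟩
      obtain ⟨m, hm, hmax⟩ := exists_maximum l hne
      obtain ⟨L, R, rfl⟩ := List.append_of_mem hm
      rw [List.nodup_append] at hnd
      obtain ⟨hndL, hndmR, hdisj⟩ := hnd
      have hndR : R.Nodup := hndmR.of_cons
      have hmR : m ∉ R := (List.nodup_cons.mp hndmR).1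
      have hLlt : ∀ a ∈ L, a < m := by
        intro a ha
        have h1 : a ≤ m := hmax a (by simp [ha])
        have h2 : a ≠ m := fun h => hdisj a ha m List.mem_cons_self h
        omega
      have hRlt : ∀ c ∈ R, c < m := by
        intro c hc
        have h1 : c ≤ m := hmax c (by simp [hc])
        have h2 : c ≠ m := fun h => hmR (h ▸ hc)
        omega
      have hcross : ∀ a ∈ L, ∀ c ∈ R, a < c := by
        intro a ha c hc
        have hne' : a ≠ c := fun h => hdisj a ha c (List.mem_cons_of_mem m hc) h
        by_contra hlt
        have hpat : [a, m, c] <+ L ++ m :: R :=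
          List.Sublist.append (List.singleton_sublist.mpr ha)
            (List.Sublist.cons₂ m (List.singleton_sublist.mpr hc))
        exact hav a m c hpat (by omega) (hLlt a ha)
      have hlenL : L.length ≤ N := by simp at hlen; omega
      have hlenR : R.length ≤ N := by simp at hlen; omega
      have havL : AvP L := fun a b c hs => hav a b c (hs.trans (List.sublist_append_left _ _))
      have havR : AvP R := fun a b c hs =>
        hav a b c (hs.trans ((List.sublist_cons_self m R).trans (List.sublist_append_right _ _)))
      obtain ⟨oL, hgL, hsL⟩ := ih L hlenL hndL havL
      obtain ⟨oR, hgR, hsR⟩ := ih R hlenR hndR havR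
      have hpL : oL.Perm L := by simpa using gen_perm hgL
      have hpR : oR.Perm R := by simpa using gen_perm hgR
      refine ⟨oL ++ (oR ++ [m]), ?_, ?_⟩
      · have g1 : Gen ([] : List ℕ) [m] [m] := Gen.pop Gen.nil
        have g2 : Gen R [m] (oR ++ [m]) := by simpa using gen_append hgR g1
        have g3 : Gen (m :: R) [] (oR ++ [m]) := Gen.push g2
        simpa using gen_append hgL g3
      · rw [List.pairwise_append]
        refine ⟨hsL, ?_, ?_⟩
        · rw [List.pairwise_append]
          refine ⟨hsR, by simp, ?_⟩
          intro a ha b hb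
          simp at hb; subst hb
          exact hRlt a (hpR.mem_iff.mp ha)
        · intro a ha b hb
          have haL : a ∈ L := hpL.mem_iff.mp ha
          rcases List.mem_append.mp hb with hb | hb
          · exact hcross a haL b (hpR.mem_iff.mp hb)
          · simp at hb; subst hb; exact hLlt a haL

lemma permList_length {n : ℕ} (p : Equiv.Perm (Fin n)) : (permList p).length = n := by
  simp [permList]

lemma permList_nodup {n : ℕ} (p : Equiv.Perm (Fin n)) : (permList p).Nodup := by
  rw [permList, List.nodup_ofFn]
  intro i j h
  simp only [add_left_inj] at h
  exact p.injective (Fin.val_injective h)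

lemma mem_permList {n : ℕ} (p : Equiv.Perm (Fin n)) (x : ℕ) :
    x ∈ permList p ↔ ∃ i : Fin n, (p i : ℕ) + 1 = x := by
  simp [permList, List.mem_ofFn, Set.range]

lemma mem_idSeq (n x : ℕ) : x ∈ idSeq n ↔ ∃ k, k < n ∧ k + 1 = x := by
  simp [idSeq]

lemma permList_perm_idSeq {n : ℕ} (p : Equiv.Perm (Fin n)) :
    (permList p).Perm (idSeq n) := by
  have hnd2 : (idSeq n).Nodup := by
    rw [idSeq]
    exact (List.nodup_range (n := n)).map (fun a b h => by omega)
  apply List.Subperm.antisymm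
  · apply List.subperm_of_subset (permList_nodup p)
    intro x hx
    obtain ⟨i, rfl⟩ := (mem_permList p x).mp hx
    exact (mem_idSeq n _).mpr ⟨p i, (p i).isLt, rfl⟩
  · apply List.subperm_of_subset hnd2
    intro x hx
    obtain ⟨k, hk, rfl⟩ := (mem_idSeq n x).mp hx
    exact (mem_permList p _).mpr ⟨p.symm ⟨k, hk⟩, by simp⟩

lemma idSeq_sorted (n : ℕ) : (idSeq n).Pairwise (· < ·) := by
  rw [idSeq, List.pairwise_map]
  exact (List.pairwise_lt_range (n := n)).imp (fun h => by omega)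

lemma permList_getElem {n : ℕ} (p : Equiv.Perm (Fin n)) (i : Fin n)
    (h : (i : ℕ) < (permList p).length) :
    (permList p)[(i : ℕ)] = (p i : ℕ) + 1 := by
  simp only [permList, List.getElem_ofFn]

lemma avp_iff {n : ℕ} (p : Equiv.Perm (Fin n)) :
    AvP (permList p) ↔ Avoids231 p := by
  have hl : (permList p).length = n := permList_length p
  constructor
  · intro h
    rintro ⟨i, j, k, hij, hjk, hki, hij'⟩
    have hpw : List.Pairwise (fun x1 x2 : Fin (permList p).length => x1 < x2)
        [Fin.cast hl.symm i, Fin.cast hl.symm j, Fin.cast hl.symm k] := by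
      refine List.Pairwise.cons ?_ (List.Pairwise.cons ?_
        (List.Pairwise.cons ?_ List.Pairwise.nil))
      · intro a' ha'
        rcases List.mem_cons.mp ha' with rfl | ha'
        · exact hij
        · have he : a' = Fin.cast hl.symm k := by simpa using ha'
          subst he
          exact hij.trans hjk
      · intro a' ha'
        have he : a' = Fin.cast hl.symm k := by simpa using ha'
        subst he
        exact hjk
      · intro a' ha'
        simp at ha'
    have hsub := List.map_getElem_sublist hpw
    have hsub' : [(p i : ℕ) + 1, (p j : ℕ) + 1, (p k : ℕ) + 1] <+ permList p := by
      have e1 : (permList p)[((Fin.cast hl.symm i : Fin _) : ℕ)] = (p i : ℕ) + 1 :=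
        permList_getElem p i (by rw [hl]; exact i.isLt)
      have e2 : (permList p)[((Fin.cast hl.symm j : Fin _) : ℕ)] = (p j : ℕ) + 1 :=
        permList_getElem p j (by rw [hl]; exact j.isLt)
      have e3 : (permList p)[((Fin.cast hl.symm k : Fin _) : ℕ)] = (p k : ℕ) + 1 :=
        permList_getElem p k (by rw [hl]; exact k.isLt)
      simpa only [List.map_cons, List.map_nil, Fin.getElem_fin, e1, e2, e3] using hsub
    have hki' : (p k : ℕ) < (p i : ℕ) := hki
    have hij'' : (p i : ℕ) < (p j : ℕ) := hij'
    exact h _ _ _ hsub' (by omega) (by omega)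
  · intro h a b c hsub hca hab
    obtain ⟨is, heq, hpw⟩ := List.sublist_eq_map_getElem hsub
    have hlen3 : is.length = 3 := by
      have := congrArg List.length heq
      simpa using this.symm
    rcases is with _ | ⟨i0, _ | ⟨i1, _ | ⟨i2, _ | ⟨i3, is⟩⟩⟩⟩ <;> simp at hlen3
    simp only [List.map_cons, List.map_nil, List.cons.injEq, and_true] at heq
    obtain ⟨ha, hb, hc⟩ := heq
    have e0 : (permList p)[i0] = (p (Fin.cast hl i0) : ℕ) + 1 :=
      permList_getElem p (Fin.cast hl i0) (by simpa using i0.isLt)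
    have e1 : (permList p)[i1] = (p (Fin.cast hl i1) : ℕ) + 1 :=
      permList_getElem p (Fin.cast hl i1) (by simpa using i1.isLt)
    have e2 : (permList p)[i2] = (p (Fin.cast hl i2) : ℕ) + 1 :=
      permList_getElem p (Fin.cast hl i2) (by simpa using i2.isLt)
    rw [e0] at ha
    rw [e1] at hb
    rw [e2] at hc
    simp only [List.pairwise_cons, List.mem_cons, List.mem_singleton,
      List.not_mem_nil] at hpw
    have h01 : i0 < i1 := hpw.1 i1 (Or.inl rfl)
    have h12 : i1 < i2 := hpw.2.1 i2 (Or.inl rfl)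
    apply h
    refine ⟨Fin.cast hl i0, Fin.cast hl i1, Fin.cast hl i2, h01, h12, ?_, ?_⟩
    · rw [Fin.lt_def]; omega
    · rw [Fin.lt_def]; omega

theorem single_stack_sortable_iff_avoids_231 {n : ℕ} (p : Equiv.Perm (Fin n)) :
    StackSortable p ↔ Avoids231 p := by
  constructor
  · rintro ⟨w, hw⟩
    obtain ⟨o, ho, hg⟩ := run_to_gen w _ _ _ _ hw
    simp only [List.nil_append] at ho
    subst ho
    exact (avp_iff p).mp
      (sortable_avoids (permList p).length _ _ le_rfl hg (idSeq_sorted n))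
  · intro h
    obtain ⟨o, hg, hs⟩ := avoids_sortable (permList p).length _ le_rfl
      (permList_nodup p) ((avp_iff p).mpr h)
    have hperm : o.Perm (idSeq n) := by
      have h2 := gen_perm hg
      simp only [List.append_nil] at h2
      exact h2.trans (permList_perm_idSeq p)
    have heq : o = idSeq n := by
      haveI : IsAntisymm ℕ (· ≤ ·) := ⟨fun a b h1 h2 => le_antisymm h1 h2⟩
      refine List.Perm.eq_of_pairwise (le := (· ≤ ·)) (fun a b _ _ h1 h2 => le_antisymm h1 h2) ?_ ?_ hperm
      · exact hs.imp le_of_lt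
      · exact (idSeq_sorted n).imp le_of_lt
    subst heq
    obtain ⟨w, hw⟩ := gen_to_run hg []
    exact ⟨w, by simpa using hw⟩


end TwoStacks
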